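/- Let E be a real inner product space which is a complete normed space, let f : E → ℝ, and let f' : E → E be such that f has gradient f' x at every x (HasGradientAt) and f' is Lipschitz with constant L ≥ 0. Let B ∈ ℝ satisfy B ≤ f z for all z ∈ E. Let η > 0 and ε > 0, and let θ : ℕ → E evolve by FIC gradient descent: θ (t+1) = θ t − η • c t • f' (θ t), where c t = 1 if ‖f' (θ t)‖² ≤ ε and c t = √(ε / ‖f' (θ t)‖²) otherwise. Then for every T ≥ 1 there exists t < T such that min (‖f' (θ t)‖²) ε ≤ (f (θ 0) − B)/(η · T) + (L · ε · η)/2. -/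

import Mathlib

/-!
Along the segment from `x` to `y`, an `L`-Lipschitz gradient gives the descent inequality
`f y ≤ f x + ⟪∇f x, y - x⟫ + L/2 ‖y - x‖²`. For the clipped step `η c g` with `g = ∇f x` the
factor `c` satisfies `c² ‖g‖² = min ‖g‖² ε ≤ c ‖g‖²`, so each step decreases `f` by at least
`η min ‖g‖² ε - L η² ε / 2`. Telescoping over `T` steps and using `f ≥ B` bounds the average,
hence the minimum, of `min ‖∇f θₜ‖² ε`.
-/

open Real InnerProductSpace

lemma le_add_half_of_hasDerivAt_le_mul {φ φ' : ℝ → ℝ} {K : ℝ}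
    (hφ : ∀ s, HasDerivAt φ (φ' s) s) (hφ' : ∀ s ∈ Set.Ioo (0 : ℝ) 1, φ' s ≤ K * s) :
    φ 1 ≤ φ 0 + K / 2 := by
  have hψ : ∀ s, HasDerivAt (fun s => φ s - K / 2 * s ^ 2) (φ' s - K * s) s := fun s =>
    ((hφ s).fun_sub ((hasDerivAt_pow 2 s).const_mul (K / 2))).congr_deriv (by simp; ring)
  have hanti : AntitoneOn (fun s => φ s - K / 2 * s ^ 2) (Set.Icc 0 1) :=
    antitoneOn_of_hasDerivWithinAt_nonpos (convex_Icc 0 1)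
      (HasDerivAt.continuousOn fun s _ => hψ s) (fun s _ => (hψ s).hasDerivWithinAt)
      (fun s hs => by rw [interior_Icc] at hs; linarith [hφ' s hs])
  have := hanti (Set.left_mem_Icc.2 zero_le_one) (Set.right_mem_Icc.2 zero_le_one) zero_le_one
  norm_num at this
  linarith

section Clipping

variable {E : Type*} [SeminormedAddCommGroup E]

noncomputable def ficScale (ε : ℝ) (g : E) : ℝ := if ‖g‖ ^ 2 ≤ ε then 1 else √(ε / ‖g‖ ^ 2)

lemma ficScale_nonneg (ε : ℝ) (g : E) : 0 ≤ ficScale ε g := by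
  unfold ficScale; split_ifs <;> positivity

lemma ficScale_le_one (ε : ℝ) (g : E) : ficScale ε g ≤ 1 := by
  unfold ficScale
  split_ifs with h
  · rfl
  · exact sqrt_le_one.mpr (div_le_one_of_le₀ (not_le.mp h).le (by positivity))

lemma sq_ficScale_mul_norm_sq {ε : ℝ} (hε : 0 ≤ ε) (g : E) :
    ficScale ε g ^ 2 * ‖g‖ ^ 2 = min (‖g‖ ^ 2) ε := by
  unfold ficScale
  split_ifs with h
  · rw [one_pow, one_mul, min_eq_left h]
  · have hg : 0 < ‖g‖ ^ 2 := hε.trans_lt (not_le.mp h)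
    rw [sq_sqrt (by positivity), div_mul_cancel₀ ε hg.ne', min_eq_right (not_le.mp h).le]

lemma min_le_ficScale_mul_norm_sq {ε : ℝ} (hε : 0 ≤ ε) (g : E) :
    min (‖g‖ ^ 2) ε ≤ ficScale ε g * ‖g‖ ^ 2 := by
  rw [← sq_ficScale_mul_norm_sq hε]
  gcongr
  exact pow_le_of_le_one (ficScale_nonneg ε g) (ficScale_le_one ε g) two_ne_zero

end Clipping

section Gradient

variable {E : Type*} [NormedAddCommGroup E] [InnerProductSpace ℝ E] [CompleteSpace E]

lemma HasGradientAt.hasDerivAt_comp_add_smul {f : E → ℝ} {g x v : E} {s : ℝ}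
    (h : HasGradientAt f g (x + s • v)) : HasDerivAt (fun s : ℝ => f (x + s • v)) ⟪g, v⟫_ℝ s := by
  have hline : HasDerivAt (fun s : ℝ => x + s • v) v s := by
    simpa using ((hasDerivAt_id s).smul_const v).const_add x
  exact h.hasFDerivAt.comp_hasDerivAt s hline

theorem le_add_inner_add_sq_of_lipschitz_gradient {f : E → ℝ} {f' : E → E} {L : ℝ}
    (hgrad : ∀ x, HasGradientAt f (f' x) x) (hlip : ∀ x y, ‖f' x - f' y‖ ≤ L * ‖x - y‖)
    (x y : E) : f y ≤ f x + ⟪f' x, y - x⟫_ℝ + L / 2 * ‖y - x‖ ^ 2 := by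
  set v := y - x
  have hφ : ∀ s : ℝ, HasDerivAt (fun s => f (x + s • v) - s * ⟪f' x, v⟫_ℝ)
      (⟪f' (x + s • v), v⟫_ℝ - ⟪f' x, v⟫_ℝ) s := fun s =>
    (hgrad _).hasDerivAt_comp_add_smul.fun_sub (hasDerivAt_mul_const _)
  have hφ' : ∀ s ∈ Set.Ioo (0 : ℝ) 1,
      ⟪f' (x + s • v), v⟫_ℝ - ⟪f' x, v⟫_ℝ ≤ L * ‖v‖ ^ 2 * s := fun s hs =>
    calc ⟪f' (x + s • v), v⟫_ℝ - ⟪f' x, v⟫_ℝ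
        = ⟪f' (x + s • v) - f' x, v⟫_ℝ := (inner_sub_left _ _ _).symm
      _ ≤ ‖f' (x + s • v) - f' x‖ * ‖v‖ := real_inner_le_norm _ _
      _ ≤ L * ‖(x + s • v) - x‖ * ‖v‖ := by gcongr; exact hlip _ _
      _ = L * ‖v‖ ^ 2 * s := by
        rw [add_sub_cancel_left, norm_smul, norm_of_nonneg hs.1.le]; ring
  have := le_add_half_of_hasDerivAt_le_mul hφ hφ'
  simp only [one_smul, zero_smul, add_zero, one_mul, zero_mul, sub_zero, v,
    add_sub_cancel] at this
  linarith

theorem apply_sub_smul_le_of_lipschitz_gradient {f : E → ℝ} {f' : E → E} {L : ℝ}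
    (hgrad : ∀ x, HasGradientAt f (f' x) x) (hlip : ∀ x y, ‖f' x - f' y‖ ≤ L * ‖x - y‖)
    (x : E) (s : ℝ) :
    f (x - s • f' x) ≤ f x - s * ‖f' x‖ ^ 2 + L / 2 * s ^ 2 * ‖f' x‖ ^ 2 := by
  have h := le_add_inner_add_sq_of_lipschitz_gradient hgrad hlip x (x - s • f' x)
  rw [sub_sub_cancel_left, inner_neg_right, real_inner_smul_right, real_inner_self_eq_norm_sq,
    norm_neg, norm_smul, mul_pow, Real.norm_eq_abs, sq_abs] at h
  linarith

theorem min_norm_sq_le_of_fic_step {f : E → ℝ} {f' : E → E} {L η ε : ℝ}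
    (hgrad : ∀ x, HasGradientAt f (f' x) x) (hlip : ∀ x y, ‖f' x - f' y‖ ≤ L * ‖x - y‖)
    (hL : 0 ≤ L) (hη : 0 < η) (hε : 0 ≤ ε) (x : E) :
    min (‖f' x‖ ^ 2) ε ≤ (f x - f (x - η • ficScale ε (f' x) • f' x)) / η + L * ε * η / 2 := by
  set c := ficScale ε (f' x)
  have hstep := apply_sub_smul_le_of_lipschitz_gradient hgrad hlip x (η * c)
  have hsq : c ^ 2 * ‖f' x‖ ^ 2 ≤ ε := (sq_ficScale_mul_norm_sq hε _).trans_le (min_le_right _ _)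
  have hdecrease : η * min (‖f' x‖ ^ 2) ε ≤ η * (c * ‖f' x‖ ^ 2) :=
    mul_le_mul_of_nonneg_left (min_le_ficScale_mul_norm_sq hε _) hη.le
  have hcurvature : L / 2 * (η * c) ^ 2 * ‖f' x‖ ^ 2 ≤ L / 2 * η ^ 2 * ε :=
    calc L / 2 * (η * c) ^ 2 * ‖f' x‖ ^ 2 = L / 2 * η ^ 2 * (c ^ 2 * ‖f' x‖ ^ 2) := by ring
      _ ≤ L / 2 * η ^ 2 * ε := by gcongr
  refine le_of_mul_le_mul_left ?_ hη
  rw [smul_smul, mul_add, mul_div_cancel₀ _ hη.ne']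
  linarith

end Gradient

lemma exists_lt_le_div_add_of_le_sub_add {a F : ℕ → ℝ} {B K : ℝ} {T : ℕ} (hT : 1 ≤ T)
    (hstep : ∀ t < T, a t ≤ F t - F (t + 1) + K) (hB : B ≤ F T) :
    ∃ t < T, a t ≤ (F 0 - B) / T + K := by
  have hT' : (0 : ℝ) < T := by exact_mod_cast hT
  have hsum : ∑ t ∈ Finset.range T, a t ≤ ∑ _t ∈ Finset.range T, ((F 0 - B) / T + K) :=
    calc ∑ t ∈ Finset.range T, a t
        ≤ ∑ t ∈ Finset.range T, (F t - F (t + 1) + K) :=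
          Finset.sum_le_sum fun t ht => hstep t (Finset.mem_range.mp ht)
      _ = F 0 - F T + T * K := by
          rw [Finset.sum_add_distrib, Finset.sum_range_sub', Finset.sum_const, Finset.card_range,
            nsmul_eq_mul]
      _ ≤ ∑ _t ∈ Finset.range T, ((F 0 - B) / T + K) := by
          rw [Finset.sum_const, Finset.card_range, nsmul_eq_mul, mul_add, mul_div_cancel₀ _ hT'.ne']
          linarith
  obtain ⟨t, ht, hle⟩ := Finset.exists_le_of_sum_le (Finset.nonempty_range_iff.mpr (by omega)) hsum
  exact ⟨t, Finset.mem_range.mp ht, hle⟩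

theorem fic_gradient_descent_convergence
    {E : Type*} [NormedAddCommGroup E] [InnerProductSpace ℝ E] [CompleteSpace E]
    (f : E → ℝ) (f' : E → E) (hgrad : ∀ x, HasGradientAt f (f' x) x)
    (L : ℝ) (hL : 0 ≤ L) (hlip : ∀ x y : E, ‖f' x - f' y‖ ≤ L * ‖x - y‖)
    (B : ℝ) (hB : ∀ z : E, B ≤ f z)
    (η : ℝ) (hη : 0 < η) (ε : ℝ) (hε : 0 < ε)
    (θ : ℕ → E) (c : ℕ → ℝ)
    (hc : ∀ t, c t = if ‖f' (θ t)‖ ^ 2 ≤ ε then (1 : ℝ)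
                     else Real.sqrt (ε / ‖f' (θ t)‖ ^ 2))
    (hupdate : ∀ t, θ (t + 1) = θ t - η • c t • f' (θ t)) :
    ∀ T : ℕ, 1 ≤ T → ∃ t < T,
      min (‖f' (θ t)‖ ^ 2) ε ≤ (f (θ 0) - B) / (η * T) + L * ε * η / 2 := by
  intro T hT
  have hstep : ∀ t < T,
      min (‖f' (θ t)‖ ^ 2) ε ≤ f (θ t) / η - f (θ (t + 1)) / η + L * ε * η / 2 := by
    intro t _
    rw [hupdate t, hc t, ← sub_div]
    exact min_norm_sq_le_of_fic_step hgrad hlip hL hη hε.le (θ t)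
  obtain ⟨t, ht, hle⟩ := exists_lt_le_div_add_of_le_sub_add hT hstep
    (div_le_div_of_nonneg_right (hB (θ T)) hη.le)
  exact ⟨t, ht, by rwa [← sub_div, div_div] at hle⟩
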